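/- For every infinite set A and every n ≥ 1, there is an injection from the set 𝒫(𝒪ₙ(A))^ω of all ω-sequences of subsets of 𝒪ₙ(A) into the power set 𝒫(ℬₙ(A)). -/

import Mathlib

open Set

/-- A finitary partition of the whole type `α`: a family of pairwise disjoint
nonempty finite subsets whose union is everything. -/
def IsFinitaryPartition {α : Type*} (P : Set (Set α)) : Prop :=
  (∀ p ∈ P, p.Finite) ∧ (∀ p ∈ P, p.Nonempty) ∧
    (∀ p ∈ P, ∀ q ∈ P, p ≠ q → Disjoint p q) ∧ ⋃₀ P = Set.univ

/-- The set of non-singleton blocks of a partition. -/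
def nsBlocks {α : Type*} (P : Set (Set α)) : Set (Set α) :=
  {p ∈ P | p.Nontrivial}

/-- `ℬₙ(A)`: finitary partitions with exactly `n` non-singleton blocks. -/
def BPart (α : Type*) (n : ℕ) : Set (Set (Set α)) :=
  {P | IsFinitaryPartition P ∧ (nsBlocks P).Finite ∧ (nsBlocks P).ncard = n}

/-- `ℬ_fin(A)`: finitary partitions with finitely many non-singleton blocks. -/
def BFinPart (α : Type*) : Set (Set (Set α)) :=
  {P | IsFinitaryPartition P ∧ (nsBlocks P).Finite}

/-- `𝒪ₙ(A)`: ordered `n`-tuples of pairwise disjoint finite subsets of `A`. -/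
def OTuple (α : Type*) (n : ℕ) : Set (Fin n → Set α) :=
  {p | (∀ i, (p i).Finite) ∧ ∀ i j, i ≠ j → Disjoint (p i) (p j)}

/-
A sequence of subsets of `𝒪ₙ(A)` is the same thing as a subset of `ℕ × 𝒪ₙ(A)`, so it suffices to
inject `ℕ × 𝒪ₙ(A)` into `ℬₙ(A)`. The former has cardinality at most `|A|`, since an `n`-tuple of
finite subsets of `A` is coded by `n` elements of `[A]^{<ω}`, which has cardinality `|A|`.
Conversely `A` injects into `ℬₙ(A)`: fix an injection `e : A × n × 2 → A` and send `a` to the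
partition whose non-singleton blocks are the `n` pairs `{e(a,i,0), e(a,i,1)}`, all other blocks
being singletons.
-/

open Cardinal

universe u v

section

variable {α : Type*}

def completeWithSingletons (B : Set (Set α)) : Set (Set α) :=
  B ∪ {s | ∃ x ∉ ⋃₀ B, s = {x}}

section CompleteWithSingletons

variable {B : Set (Set α)}

theorem isFinitaryPartition_completeWithSingletons (hfin : ∀ p ∈ B, p.Finite)
    (hne : ∀ p ∈ B, p.Nonempty) (hdisj : B.PairwiseDisjoint id) :
    IsFinitaryPartition (completeWithSingletons B) := by
  refine ⟨?_, ?_, ?_, ?_⟩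
  · rintro p (hp | ⟨x, -, rfl⟩)
    exacts [hfin p hp, finite_singleton x]
  · rintro p (hp | ⟨x, -, rfl⟩)
    exacts [hne p hp, singleton_nonempty x]
  · rintro p (hp | ⟨x, hx, rfl⟩) q (hq | ⟨y, hy, rfl⟩) hpq
    · exact hdisj hp hq hpq
    · exact disjoint_singleton_right.2 fun hyp => hy ⟨p, hp, hyp⟩
    · exact disjoint_singleton_left.2 fun hxq => hx ⟨q, hq, hxq⟩
    · exact disjoint_singleton.2 fun hxy => hpq (hxy ▸ rfl)
  · refine eq_univ_of_forall fun x => ?_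
    by_cases hx : x ∈ ⋃₀ B
    · obtain ⟨p, hp, hxp⟩ := hx
      exact ⟨p, Or.inl hp, hxp⟩
    · exact ⟨{x}, Or.inr ⟨x, hx, rfl⟩, rfl⟩

theorem nsBlocks_completeWithSingletons (hnt : ∀ p ∈ B, p.Nontrivial) :
    nsBlocks (completeWithSingletons B) = B := by
  ext p
  constructor
  · rintro ⟨hp | ⟨x, -, rfl⟩, hpnt⟩
    exacts [hp, absurd hpnt not_nontrivial_singleton]
  · exact fun hp => ⟨Or.inl hp, hnt p hp⟩

theorem completeWithSingletons_mem_BPart {n : ℕ} (hfin : ∀ p ∈ B, p.Finite)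
    (hnt : ∀ p ∈ B, p.Nontrivial) (hdisj : B.PairwiseDisjoint id) (hB : B.Finite)
    (hcard : B.ncard = n) : completeWithSingletons B ∈ BPart α n := by
  refine ⟨isFinitaryPartition_completeWithSingletons hfin (fun p hp => (hnt p hp).nonempty) hdisj,
    ?_⟩
  rw [nsBlocks_completeWithSingletons hnt]
  exact ⟨hB, hcard⟩

end CompleteWithSingletons

def fiberBlocks {ι β : Type*} (e : α × ι × β ↪ α) (a : α) : Set (Set α) :=
  range fun i => range fun b => e (a, i, b)

section FiberBlocks

variable {ι β : Type*} (e : α × ι × β ↪ α)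

theorem fiberBlocks_finite_of_mem [Finite β] (a : α) : ∀ p ∈ fiberBlocks e a, p.Finite := by
  rintro _ ⟨i, rfl⟩
  exact finite_range _

theorem fiberBlocks_nontrivial_of_mem [Nontrivial β] (a : α) :
    ∀ p ∈ fiberBlocks e a, p.Nontrivial := by
  rintro _ ⟨i, rfl⟩
  obtain ⟨b, b', hbb'⟩ := exists_pair_ne β
  exact ⟨_, mem_range_self b, _, mem_range_self b', fun h => hbb' (by simpa using e.injective h)⟩

theorem fiberBlocks_pairwiseDisjoint (a : α) : (fiberBlocks e a).PairwiseDisjoint id := by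
  rintro _ ⟨i, rfl⟩ _ ⟨j, rfl⟩ hij
  refine disjoint_range_iff.2 fun b b' h => hij ?_
  obtain rfl : i = j := (by simpa using e.injective h : i = j ∧ b = b').1
  rfl

theorem ncard_fiberBlocks [Nonempty β] (a : α) : (fiberBlocks e a).ncard = Nat.card ι := by
  refine ncard_range_of_injective fun i j hij => ?_
  obtain ⟨b, hb⟩ : e (a, i, Classical.arbitrary β) ∈ range fun b => e (a, j, b) :=
    hij ▸ mem_range_self _
  exact (by simpa using e.injective hb : j = i ∧ b = _).1.symm

theorem fiberBlocks_injective [Nonempty ι] [Nonempty β] : Function.Injective (fiberBlocks e) := by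
  intro a a' h
  obtain ⟨j, hj⟩ : (range fun b => e (a, Classical.arbitrary ι, b)) ∈ fiberBlocks e a' :=
    h ▸ mem_range_self _
  beta_reduce at hj
  obtain ⟨b, hb⟩ : e (a, Classical.arbitrary ι, Classical.arbitrary β) ∈
      range fun b => e (a', j, b) :=
    hj ▸ mem_range_self _
  exact (by simpa using e.injective hb : a' = a ∧ j = _ ∧ b = _).1.symm

end FiberBlocks

theorem exists_embedding_prod_finite (α : Type u) (β : Type v) [Infinite α] [Finite β] :
    Nonempty (α × β ↪ α) := by
  refine lift_mk_le'.1 ?_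
  have hα : ℵ₀ ≤ lift.{max u v} #α := aleph0_le_lift.2 (aleph0_le_mk α)
  simp only [mk_prod, lift_mul, lift_lift]
  exact mul_le_of_le hα le_rfl ((lift_lt_aleph0.2 (lt_aleph0_of_finite β)).le.trans hα)

theorem mk_le_mk_BPart [Infinite α] {n : ℕ} (hn : 1 ≤ n) : #α ≤ #(BPart α n) := by
  have : Nonempty (Fin n) := ⟨⟨0, hn⟩⟩
  obtain ⟨e⟩ := exists_embedding_prod_finite α (Fin n × Bool)
  refine ⟨⟨fun a => ⟨completeWithSingletons (fiberBlocks e a), ?_⟩, fun a a' h => ?_⟩⟩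
  · exact completeWithSingletons_mem_BPart (fiberBlocks_finite_of_mem e a)
      (fiberBlocks_nontrivial_of_mem e a) (fiberBlocks_pairwiseDisjoint e a)
      (finite_range _) (by rw [ncard_fiberBlocks, Nat.card_fin])
  · refine fiberBlocks_injective e ?_
    rw [← nsBlocks_completeWithSingletons (fiberBlocks_nontrivial_of_mem e a),
      ← nsBlocks_completeWithSingletons (fiberBlocks_nontrivial_of_mem e a')]
    exact congrArg (nsBlocks ∘ Subtype.val) h

theorem mk_OTuple_le [Infinite α] (n : ℕ) : #(OTuple α n) ≤ #α :=
  calc #(OTuple α n)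
      ≤ #(Fin n → Finset α) :=
        mk_le_of_injective (f := fun p i => (p.2.1 i).toFinset) fun p q h =>
          Subtype.ext <| funext fun i => Finite.toFinset_inj.1 (congrFun h i)
    _ = #α ^ n := by simp [mk_finset_of_infinite]
    _ ≤ #α := power_nat_le (aleph0_le_mk α)

end

/-- For every infinite set `A` and every `n ≥ 1`, there is an injection from
the set `𝒫(𝒪ₙ(A))^ω` of ω-sequences of subsets of `𝒪ₙ(A)` into `𝒫(ℬₙ(A))`. -/
theorem statement5 {α : Type*} [Infinite α] (n : ℕ) (hn : 1 ≤ n) :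
    ∃ H : (ℕ → Set ↥(OTuple α n)) → Set ↥(BPart α n), Function.Injective H := by
  obtain ⟨g⟩ : Nonempty (ℕ × OTuple α n ↪ BPart α n) := by
    refine le_def _ _ |>.1 ?_
    calc #(ℕ × OTuple α n) = ℵ₀ * #(OTuple α n) := by simp
      _ ≤ #α := mul_le_of_le (aleph0_le_mk α) (aleph0_le_mk α) (mk_OTuple_le n)
      _ ≤ #(BPart α n) := mk_le_mk_BPart hn
  refine ⟨fun S => g '' {p | p.2 ∈ S p.1}, fun S T h => ?_⟩
  have hST := image_injective.2 g.injective h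
  funext k
  ext x
  exact Set.ext_iff.1 hST (k, x)
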